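/- Let V = ℂ[∂]x ⊕ ℂ[∂]y with even part ℂ[∂]x and odd part ℂ[∂]y. For a,b ∈ ℂ, c ∈ ℂ*, the actions L_i _λ x = cⁱ(∂+aλ+b)x, L_i _λ y = cⁱ(∂+(a+1/2)λ+b)y, G_i _λ x = cⁱ y, G_i _λ y = cⁱ(∂+2aλ+b)x define a conformal module structure over the loop super-Virasoro conformal superalgebra 𝔠𝔩𝔰: in particular [L_i _λ L_j]_{λ+μ} v = L_i _λ(L_j _μ v) − L_j _μ(L_i _λ v), [L_i _λ G_j]_{λ+μ} v = L_i _λ(G_j _μ v) − G_j _μ(L_i _λ v), and [G_i _λ G_j]_{λ+μ} v = G_i _λ(G_j _μ v) + G_j _μ(G_i _λ v) for v ∈ {x,y}. -/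

import Mathlib

open Polynomial

/-- `ℂ[∂]`. -/
abbrev P := Polynomial ℂ
/-- The free `ℂ[∂]`-module `V = ℂ[∂]x ⊕ ℂ[∂]y`: the first component is the coefficient of
the even generator `x`, the second that of the odd generator `y`. -/
abbrev V := P × P

/-- Substitution `∂ ↦ ∂ + λ`. -/
noncomputable def sh (l : ℂ) (f : P) : P := f.comp (Polynomial.X + Polynomial.C l)

/-- The action of `∂` on `V`. -/
noncomputable def dV (v : V) : V := (Polynomial.X * v.1, Polynomial.X * v.2)

/-- The `λ`-action of `L_i` on `M_{a,b,c}`: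
`L_i ₗ x = cⁱ(∂+aλ+b)x`, `L_i ₗ y = cⁱ(∂+(a+1/2)λ+b)y`, extended by
`L_i ₗ (f(∂)v) = f(∂+λ) L_i ₗ v`. -/
noncomputable def LM (a b c : ℂ) (i : ℤ) (l : ℂ) (v : V) : V :=
  (Polynomial.C (c ^ i) * sh l v.1 * (Polynomial.X + Polynomial.C (a*l + b)),
   Polynomial.C (c ^ i) * sh l v.2 * (Polynomial.X + Polynomial.C ((a + 1/2)*l + b)))

/-- The `λ`-action of `G_i` on `M_{a,b,c}`:
`G_i ₗ x = cⁱ y`, `G_i ₗ y = cⁱ(∂+2aλ+b)x`. -/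
noncomputable def GM (a b c : ℂ) (i : ℤ) (l : ℂ) (v : V) : V :=
  (Polynomial.C (c ^ i) * sh l v.2 * (Polynomial.X + Polynomial.C (2*a*l + b)),
   Polynomial.C (c ^ i) * sh l v.1)

/-- The `λ`-action of `L_i` on `M'_{a,b,c}`:
`L_i ₗ x = cⁱ(∂+aλ+b)x`, `L_i ₗ y = cⁱ(∂+(a−1/2)λ+b)y`. -/
noncomputable def LM' (a b c : ℂ) (i : ℤ) (l : ℂ) (v : V) : V :=
  (Polynomial.C (c ^ i) * sh l v.1 * (Polynomial.X + Polynomial.C (a*l + b)),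
   Polynomial.C (c ^ i) * sh l v.2 * (Polynomial.X + Polynomial.C ((a - 1/2)*l + b)))

/-- The `λ`-action of `G_i` on `M'_{a,b,c}`:
`G_i ₗ x = cⁱ(∂+(2a−1)λ+b)y`, `G_i ₗ y = cⁱ x`. -/
noncomputable def GM' (a b c : ℂ) (i : ℤ) (l : ℂ) (v : V) : V :=
  (Polynomial.C (c ^ i) * sh l v.2,
   Polynomial.C (c ^ i) * sh l v.1 * (Polynomial.X + Polynomial.C ((2*a - 1)*l + b)))

/-!
Every action is a shift `∂ ↦ ∂ + λ` of the coefficient polynomials followed by multiplication by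
`cⁱ` and a linear polynomial in `∂`. Shifts are ring endomorphisms of `ℂ[∂]` with
`sh λ ∘ sh μ = sh (λ + μ)`, so each side of each identity is, componentwise, `cⁱ⁺ʲ` times the
`(λ + μ)`-shift of a coefficient of `v` times a polynomial in `∂, λ, μ`, and the identities become
polynomial identities.
-/

theorem sh_eq_taylor (l : ℂ) (f : P) : sh l f = taylor l f := rfl

@[simp]
theorem sh_mul (l : ℂ) (f g : P) : sh l (f * g) = sh l f * sh l g := by
  simp only [sh_eq_taylor, taylor_mul]

@[simp]
theorem sh_C (l r : ℂ) : sh l (C r) = C r := by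
  simp only [sh_eq_taylor, taylor_C]

@[simp]
theorem sh_add (l : ℂ) (f g : P) : sh l (f + g) = sh l f + sh l g := by
  simp only [sh_eq_taylor, map_add]

@[simp]
theorem sh_X (l : ℂ) : sh l X = X + C l := by
  simp only [sh_eq_taylor, taylor_X]

@[simp]
theorem sh_sh (l m : ℂ) (f : P) : sh l (sh m f) = sh (l + m) f := by
  simp only [sh_eq_taylor, taylor_taylor]

theorem stmt8 (a b c : ℂ) (hc : c ≠ 0) (i j : ℤ) (l m : ℂ) (v : V) :
    (l - m) • LM a b c (i+j) (l+m) v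
        = LM a b c i l (LM a b c j m v) - LM a b c j m (LM a b c i l v)
    ∧ ((1/2)*l - m) • GM a b c (i+j) (l+m) v
        = LM a b c i l (GM a b c j m v) - GM a b c j m (LM a b c i l v)
    ∧ (2 : ℂ) • LM a b c (i+j) (l+m) v
        = GM a b c i l (GM a b c j m v) + GM a b c j m (GM a b c i l v) := by
  have hpow : c ^ (i + j) = c ^ i * c ^ j := zpow_add₀ hc i j
  -- compare values at every point, so that the scalar `1/2` lives in the field `ℂ` for `ring`
  refine ⟨?_, ?_, ?_⟩ <;>
    refine Prod.ext (Polynomial.funext fun r ↦ ?_) (Polynomial.funext fun r ↦ ?_) <;>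
    simp only [LM, GM, sh_add, sh_mul, sh_C, sh_X, sh_sh, add_comm m l, hpow, Prod.smul_fst,
      Prod.smul_snd, Prod.fst_sub, Prod.snd_sub, Prod.fst_add, Prod.snd_add, eval_smul, eval_mul,
      eval_add, eval_sub, eval_C, eval_X, smul_eq_mul] <;>
    ring
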